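/- Assume L(ε) stabilizes at k ≥ 0. Then the formal power series S(ε) := Σ_{l≥0} ε^l·S_{l+1} factorizes as S(ε) = ψ(ε)·Δ(ε), where ψ(ε) := Σ_{i≥0} ε^i·ψ_i; that is, for every l ≥ 0 one has S_{l+1} = Σ_{i+j=l, 0≤j≤k} ψ_i∘(S_{j+1}∘P_{j+1}). -/

import Mathlib

/-!
Every `b ∈ N m` is the root of the Jordan chain `j ↦ M (m - j) m b` of length `m`, since
`∑ i ≤ n, L i ∘ M (i + t) (n + t) = S (n + 1)`. Conversely, the root of a Jordan chain of length
`r + 1` lies in `N (r + 1)`: comparing the chain with the one built from `M` leaves a chain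
vanishing at `0`, whose defect lies in `R 1 ⊕ ⋯ ⊕ R r`; hence so does `Sb (r + 1) (c 0)`, and
`S (r + 1)` is `Sb (r + 1)` followed by the projection away from these. Stabilization at `k`
thus forces every element of `N (k + 1)` to have infinite rank, so it lies in every `N m` and is
killed by every `S m`. Writing `x` as `∑ Pn i x` plus an element of `N (k + 1)`, the operator
`S (l + 1)` kills the parts in `Nc i` for `i > l + 1`, and on `Nc (j + 1)` one has
`ψ (l - j) ∘ S (j + 1) = S (l + 1)` because `T i` vanishes on `R (j + 1)` for `i ≠ j + 1`.
-/

open Finset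

theorem Finset.sum_Icc_one_eq_sum_range {M : Type*} [AddCommMonoid M] (f : ℕ → M) (n : ℕ) :
    ∑ i ∈ Icc 1 n, f i = ∑ i ∈ range n, f (i + 1) := by
  induction n with
  | zero => simp
  | succ n ih => rw [sum_Icc_succ_top (by omega), ih, sum_range_succ]

theorem Finset.sum_range_sum_Icc_comm {M : Type*} [AddCommMonoid M] (n : ℕ) (f : ℕ → ℕ → M) :
    ∑ i ∈ range (n + 1), ∑ b ∈ Icc i n, f i b = ∑ b ∈ range (n + 1), ∑ i ∈ range (b + 1), f i b :=
  sum_comm' fun i b => by simp only [mem_range, mem_Icc]; omega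

theorem iSup_Icc_mono {α : Type*} [CompleteLattice α] (f : ℕ → α) :
    Monotone fun r => ⨆ i ∈ Icc 1 r, f i :=
  fun _ _ hrs => biSup_mono fun _ hi => Icc_subset_Icc_right hrs hi

section

variable {𝕂 B B' : Type*} [Ring 𝕂] [AddCommGroup B] [Module 𝕂 B] [AddCommGroup B'] [Module 𝕂 B']

section JordanChain

variable (L : ℕ → B →ₗ[𝕂] B')

def IsJordanChain (m : ℕ) (c : ℕ → B) : Prop :=
  ∀ l, l + 1 ≤ m → ∑ i ∈ range (l + 1), L i (c (l - i)) = 0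

/-- Rank `0` (no chain at all) is the junk value `sSup ∅ = 0`. -/
noncomputable def jordanRank (b₀ : B) : ℕ∞ :=
  sSup {x : ℕ∞ | ∃ m : ℕ, 1 ≤ m ∧ (∃ c : ℕ → B, c 0 = b₀ ∧ IsJordanChain L m c) ∧ x = m}

def chainDefect (r : ℕ) (c : ℕ → B) : B' :=
  ∑ i ∈ Icc 1 r, L i (c (r - i))

variable {L}

theorem IsJordanChain.mono {m n : ℕ} {c : ℕ → B} (h : IsJordanChain L m c) (hnm : n ≤ m) :
    IsJordanChain L n c :=
  fun l hl => h l (hl.trans hnm)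

theorem IsJordanChain.sub {m : ℕ} {c d : ℕ → B} (hc : IsJordanChain L m c)
    (hd : IsJordanChain L m d) : IsJordanChain L m (c - d) := by
  intro l hl
  simp only [Pi.sub_apply, map_sub, sum_sub_distrib, hc l hl, hd l hl, sub_self]

theorem IsJordanChain.map_zero_add_chainDefect {r : ℕ} {c : ℕ → B}
    (h : IsJordanChain L (r + 1) c) : L 0 (c r) + chainDefect L r c = 0 := by
  rw [← h r le_rfl, sum_range_eq_add_Ico _ r.succ_pos, Nat.succ_eq_add_one,
    Ico_add_one_right_eq_Icc, Nat.sub_zero, chainDefect]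

theorem IsJordanChain.tail {r : ℕ} {c : ℕ → B} (h : IsJordanChain L (r + 1) c) (h0 : c 0 = 0) :
    IsJordanChain L r (fun j => c (j + 1)) := by
  intro l hl
  have h' := h (l + 1) (by omega)
  rw [sum_range_succ, Nat.sub_self, h0, map_zero, add_zero] at h'
  rw [← h']
  refine sum_congr rfl fun i hi => ?_
  rw [show l + 1 - i = l - i + 1 by have := mem_range.mp hi; omega]

theorem chainDefect_sub (r : ℕ) (c d : ℕ → B) :
    chainDefect L r (c - d) = chainDefect L r c - chainDefect L r d := by
  simp only [chainDefect, Pi.sub_apply, map_sub, sum_sub_distrib]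

theorem chainDefect_succ_of_apply_zero {r : ℕ} {c : ℕ → B} (h0 : c 0 = 0) :
    chainDefect L (r + 1) c = chainDefect L r (fun j => c (j + 1)) := by
  rw [chainDefect, sum_Icc_succ_top (by omega), Nat.sub_self, h0, map_zero, add_zero]
  refine sum_congr rfl fun i hi => ?_
  rw [mem_Icc] at hi
  rw [show r + 1 - i = r - i + 1 by omega]

theorem le_jordanRank {m : ℕ} {c : ℕ → B} (hm : 1 ≤ m) (h : IsJordanChain L m c) :
    (m : ℕ∞) ≤ jordanRank L (c 0) :=
  le_sSup ⟨m, hm, ⟨c, rfl, h⟩, rfl⟩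

theorem exists_isJordanChain_of_jordanRank_eq_top {b₀ : B} (h : jordanRank L b₀ = ⊤) (m : ℕ) :
    ∃ c : ℕ → B, c 0 = b₀ ∧ IsJordanChain L m c := by
  obtain ⟨_, ⟨n, -, ⟨c, hc0, hc⟩, rfl⟩, hmn⟩ := lt_sSup_iff.mp (h ▸ ENat.natCast_lt_top m)
  exact ⟨c, hc0, hc.mono (by exact_mod_cast hmn.le)⟩

end JordanChain

theorem mem_iSup_Icc_of_mem {R : ℕ → Submodule 𝕂 B'} {j r : ℕ} (hj : 1 ≤ j) (hjr : j ≤ r)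
    {y : B'} (hy : y ∈ R j) : y ∈ ⨆ i ∈ Icc 1 r, R i :=
  le_iSup₂_of_le (f := fun i (_ : i ∈ Icc 1 r) => R i) j (mem_Icc.mpr ⟨hj, hjr⟩) le_rfl hy

/-- `Sb i` is `S̄ᵢ`, `Nc`/`Rc` are the chosen complements, `P i` is `𝒫ᵢ`, and `T i : B̄ → B` is
`Sᵢ⁻¹ ∘ 𝒫ᵢ`. -/
structure IsJordanRecursion (L Sb S : ℕ → B →ₗ[𝕂] B') (N Nc : ℕ → Submodule 𝕂 B)
    (R Rc : ℕ → Submodule 𝕂 B') (P : ℕ → B' →ₗ[𝕂] B') (T : ℕ → B' →ₗ[𝕂] B)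
    (E M : ℕ → ℕ → B →ₗ[𝕂] B) : Prop where
  N_zero : N 0 = ⊤
  Sb_one : Sb 1 = L 0
  Sb_succ : ∀ k, 1 ≤ k → Sb (k + 1) = ∑ i ∈ Icc 1 k, (L i).comp (M i k)
  S_succ : ∀ k, S (k + 1) = Sb (k + 1) - ∑ i ∈ Icc 1 k, (P i).comp (Sb (k + 1))
  N_succ : ∀ k, N (k + 1) = LinearMap.ker (S (k + 1)) ⊓ N k
  R_succ : ∀ k, R (k + 1) = Submodule.map (S (k + 1)) (N k)
  Nc_compl : ∀ k, Disjoint (Nc (k + 1)) (N (k + 1)) ∧ Nc (k + 1) ⊔ N (k + 1) = N k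
  R_sup_Rc : ∀ k, R (k + 1) ⊔ Rc (k + 1) = Rc k
  range_P_le : ∀ i, 1 ≤ i → LinearMap.range (P i) ≤ R i
  P_of_mem_R : ∀ i, 1 ≤ i → ∀ y ∈ R i, P i y = y
  P_of_mem_Rc : ∀ i, 1 ≤ i → ∀ y ∈ Rc i, P i y = 0
  P_of_mem_R_of_lt : ∀ i j, 1 ≤ j → j < i → ∀ y ∈ R j, P i y = 0
  T_mem_Nc : ∀ i, 1 ≤ i → ∀ y, T i y ∈ Nc i
  T_S : ∀ i, 1 ≤ i → ∀ x ∈ Nc i, T i (S i x) = x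
  S_T : ∀ i, 1 ≤ i → ∀ y, S i (T i y) = P i y
  E_diag : ∀ k, E (k + 1) (k + 1) = LinearMap.id
  E_succ : ∀ k i, 1 ≤ i → i ≤ k →
    E i (k + 1) = -((T i).comp (∑ v ∈ Icc (i + 1) (k + 1), (Sb v).comp (E v (k + 1))))
  M_one_one : M 1 1 = LinearMap.id
  M_one : ∀ k, 1 ≤ k → M 1 (k + 1) = E 1 (k + 1)
  M_succ : ∀ k a, 2 ≤ a → a ≤ k + 1 →
    M a (k + 1) = ∑ b ∈ Icc (a - 1) k, (M (a - 1) b).comp (E (b + 1) (k + 1))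

namespace IsJordanRecursion

variable {L Sb S : ℕ → B →ₗ[𝕂] B'} {N Nc : ℕ → Submodule 𝕂 B} {R Rc : ℕ → Submodule 𝕂 B'}
  {P : ℕ → B' →ₗ[𝕂] B'} {T : ℕ → B' →ₗ[𝕂] B} {E M : ℕ → ℕ → B →ₗ[𝕂] B}

theorem S_one (h : IsJordanRecursion L Sb S N Nc R Rc P T E M) : S 1 = L 0 := by
  simpa [h.Sb_one] using h.S_succ 0

theorem N_antitone (h : IsJordanRecursion L Sb S N Nc R Rc P T E M) : Antitone N :=
  antitone_nat_of_succ_le fun k => h.N_succ k ▸ inf_le_right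

theorem Nc_le_N (h : IsJordanRecursion L Sb S N Nc R Rc P T E M) (k : ℕ) : Nc (k + 1) ≤ N k :=
  (h.Nc_compl k).2 ▸ le_sup_left

theorem S_apply_eq_zero_of_mem_N (h : IsJordanRecursion L Sb S N Nc R Rc P T E M) {i j : ℕ}
    (hi : 1 ≤ i) (hij : i ≤ j) {x : B} (hx : x ∈ N j) : S i x = 0 := by
  obtain ⟨i, rfl⟩ := Nat.exists_eq_add_of_le' hi
  have hx' : x ∈ N (i + 1) := h.N_antitone hij hx
  rw [h.N_succ] at hx'
  exact hx'.1

theorem S_apply_eq_zero_of_mem_Nc (h : IsJordanRecursion L Sb S N Nc R Rc P T E M) {i j : ℕ}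
    (hi : 1 ≤ i) (hij : i < j) {x : B} (hx : x ∈ Nc j) : S i x = 0 := by
  obtain ⟨j, rfl⟩ : ∃ j', j = j' + 1 := ⟨j - 1, by omega⟩
  exact h.S_apply_eq_zero_of_mem_N hi (by omega) (h.Nc_le_N j hx)

theorem eq_zero_of_mem_Nc_of_S_eq_zero (h : IsJordanRecursion L Sb S N Nc R Rc P T E M)
    {k : ℕ} {x : B} (hx : x ∈ Nc (k + 1)) (hSx : S (k + 1) x = 0) : x = 0 := by
  refine Submodule.disjoint_def.mp (h.Nc_compl k).1 x hx ?_
  rw [h.N_succ]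
  exact ⟨hSx, h.Nc_le_N k hx⟩

theorem S_apply_mem_R (h : IsJordanRecursion L Sb S N Nc R Rc P T E M) {k : ℕ} {x : B}
    (hx : x ∈ N k) : S (k + 1) x ∈ R (k + 1) :=
  h.R_succ k ▸ Submodule.mem_map_of_mem hx

theorem Rc_antitone (h : IsJordanRecursion L Sb S N Nc R Rc P T E M) : Antitone Rc :=
  antitone_nat_of_succ_le fun k => h.R_sup_Rc k ▸ le_sup_right

theorem P_apply_eq_zero_of_mem_R (h : IsJordanRecursion L Sb S N Nc R Rc P T E M) {i j : ℕ}
    (hi : 1 ≤ i) (hj : 1 ≤ j) (hij : i ≠ j) {y : B'} (hy : y ∈ R j) : P i y = 0 := by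
  rcases hij.lt_or_gt with hij | hij
  · obtain ⟨j, rfl⟩ := Nat.exists_eq_add_of_le' hj
    refine h.P_of_mem_Rc i hi y (h.Rc_antitone (by omega : i ≤ j) ?_)
    exact (h.R_sup_Rc j ▸ le_sup_left : R (j + 1) ≤ Rc j) hy
  · exact h.P_of_mem_R_of_lt i j hj hij y hy

theorem T_apply_eq_zero_of_mem_R (h : IsJordanRecursion L Sb S N Nc R Rc P T E M) {i j : ℕ}
    (hi : 1 ≤ i) (hj : 1 ≤ j) (hij : i ≠ j) {y : B'} (hy : y ∈ R j) : T i y = 0 := by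
  obtain ⟨i, rfl⟩ := Nat.exists_eq_add_of_le' hi
  refine h.eq_zero_of_mem_Nc_of_S_eq_zero (h.T_mem_Nc _ hi y) ?_
  rw [h.S_T _ hi, h.P_apply_eq_zero_of_mem_R hi hj hij hy]

theorem sum_P_apply_eq_self (h : IsJordanRecursion L Sb S N Nc R Rc P T E M) {s l : ℕ}
    (hsl : s ≤ l) {y : B'} (hy : y ∈ ⨆ j ∈ Icc 1 s, R j) : ∑ i ∈ Icc 1 l, P i y = y := by
  suffices hker : ⨆ j ∈ Icc 1 s, R j ≤ LinearMap.ker (LinearMap.id - ∑ i ∈ Icc 1 l, P i) by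
    have hy' := hker hy
    rw [LinearMap.mem_ker, LinearMap.sub_apply, LinearMap.sum_apply, sub_eq_zero] at hy'
    exact hy'.symm
  refine iSup₂_le fun j hj y hy => ?_
  rw [mem_Icc] at hj
  rw [LinearMap.mem_ker, LinearMap.sub_apply, LinearMap.id_apply, LinearMap.sum_apply,
    sum_eq_single_of_mem j (mem_Icc.mpr ⟨hj.1, hj.2.trans hsl⟩), h.P_of_mem_R j hj.1 y hy,
    sub_self]
  intro i hi hij
  exact h.P_apply_eq_zero_of_mem_R (mem_Icc.mp hi).1 hj.1 hij hy

theorem S_succ_apply (h : IsJordanRecursion L Sb S N Nc R Rc P T E M) (k : ℕ) (x : B) :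
    S (k + 1) x = Sb (k + 1) x - ∑ i ∈ Icc 1 k, P i (Sb (k + 1) x) := by
  simp [h.S_succ k]

theorem E_succ_apply (h : IsJordanRecursion L Sb S N Nc R Rc P T E M) {i n : ℕ} (hi : 1 ≤ i)
    (hin : i ≤ n) (x : B) :
    E i (n + 1) x = -T i (∑ v ∈ Icc (i + 1) (n + 1), Sb v (E v (n + 1) x)) := by
  simp [h.E_succ n i hi hin]

theorem E_apply_mem_Nc (h : IsJordanRecursion L Sb S N Nc R Rc P T E M) {i n : ℕ} (hi : 1 ≤ i)
    (hin : i ≤ n) (x : B) : E i (n + 1) x ∈ Nc i := by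
  rw [h.E_succ_apply hi hin]
  exact neg_mem (h.T_mem_Nc i hi _)

theorem sum_Sb_E_apply (h : IsJordanRecursion L Sb S N Nc R Rc P T E M) (n : ℕ) (x : B) :
    ∑ c ∈ Icc 1 (n + 1), Sb c (E c (n + 1) x) = S (n + 1) x := by
  set G : ℕ → B' := fun j => ∑ c ∈ Icc (j + 1) (n + 1), Sb c (E c (n + 1) x)
  suffices key : ∀ j ≤ n, G j - ∑ i ∈ Icc 1 j, P i (G j) = S (n + 1) x by
    simpa [G] using key 0 (Nat.zero_le n)
  intro j hj
  induction hj using Nat.decreasingInduction with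
  | self => simp [G, h.E_diag, h.S_succ_apply]
  | of_succ j hjn ih =>
    have hG : G j = Sb (j + 1) (E (j + 1) (n + 1) x) + G (j + 1) := by
      simp only [G]
      rw [Icc_eq_cons_Ioc (by omega), sum_cons, ← Icc_add_one_left_eq_Ioc]
    have hP : P (j + 1) (G (j + 1)) = -S (j + 1) (E (j + 1) (n + 1) x) := by
      rw [h.E_succ_apply (by omega) (by omega), map_neg, h.S_T _ (by omega), neg_neg]
    rw [← ih, sum_Icc_succ_top (by omega), hP, h.S_succ_apply, hG]
    simp only [map_add, sum_add_distrib]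
    abel

theorem M_succ_apply (h : IsJordanRecursion L Sb S N Nc R Rc P T E M) {t i n : ℕ} (ht : 1 ≤ t)
    (hin : i ≤ n) (x : B) :
    M (i + t + 1) (n + t + 1) x =
      ∑ b ∈ Icc i n, M (i + t) (b + t) (E (b + t + 1) (n + t + 1) x) := by
  rw [h.M_succ (n + t) (i + t + 1) (by omega) (by omega), Nat.add_sub_cancel,
    ← map_add_right_Icc, sum_map, LinearMap.sum_apply]
  rfl

theorem Sb_succ_succ_apply (h : IsJordanRecursion L Sb S N Nc R Rc P T E M) (b : ℕ) (x : B) :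
    Sb (b + 2) x = ∑ i ∈ range (b + 1), L (i + 1) (M (i + 1) (b + 1) x) := by
  rw [h.Sb_succ (b + 1) (by omega), LinearMap.sum_apply, sum_Icc_one_eq_sum_range]
  rfl

theorem M_diag (h : IsJordanRecursion L Sb S N Nc R Rc P T E M) (n : ℕ) :
    M (n + 1) (n + 1) = LinearMap.id := by
  induction n with
  | zero => exact h.M_one_one
  | succ n ih =>
    rw [h.M_succ (n + 1) (n + 2) (by omega) le_rfl]
    simp [ih, h.E_diag]

theorem sum_L_M_one_apply (h : IsJordanRecursion L Sb S N Nc R Rc P T E M) (n : ℕ) (x : B) :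
    ∑ i ∈ range (n + 1), L i (M (i + 1) (n + 1) x) = S (n + 1) x := by
  rcases n with _ | n
  · simp [h.M_one_one, h.S_one]
  rw [sum_range_succ', zero_add, h.M_one _ (by omega), ← h.Sb_one, ← h.sum_Sb_E_apply,
    sum_Icc_one_eq_sum_range, sum_range_succ' _ (n + 1)]
  congr 1
  calc ∑ i ∈ range (n + 1), L (i + 1) (M (i + 1 + 1) (n + 1 + 1) x)
      = ∑ i ∈ range (n + 1), ∑ b ∈ Icc i n,
          L (i + 1) (M (i + 1) (b + 1) (E (b + 1 + 1) (n + 1 + 1) x)) :=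
        sum_congr rfl fun i hi => by
          rw [h.M_succ_apply le_rfl (by have := mem_range.mp hi; omega), map_sum]
    _ = ∑ b ∈ range (n + 1), Sb (b + 1 + 1) (E (b + 1 + 1) (n + 1 + 1) x) := by
        rw [sum_range_sum_Icc_comm]
        simp only [h.Sb_succ_succ_apply]

theorem sum_L_M_apply (h : IsJordanRecursion L Sb S N Nc R Rc P T E M) {t : ℕ} (ht : 1 ≤ t)
    (n : ℕ) (x : B) : ∑ i ∈ range (n + 1), L i (M (i + t) (n + t) x) = S (n + 1) x := by
  induction t, ht using Nat.le_induction generalizing n x with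
  | base => exact h.sum_L_M_one_apply n x
  | succ t ht ih =>
    calc ∑ i ∈ range (n + 1), L i (M (i + (t + 1)) (n + (t + 1)) x)
        = ∑ i ∈ range (n + 1), ∑ b ∈ Icc i n,
            L i (M (i + t) (b + t) (E (b + t + 1) (n + t + 1) x)) :=
          sum_congr rfl fun i hi => by
            rw [← add_assoc, ← add_assoc, h.M_succ_apply ht (by have := mem_range.mp hi; omega),
              map_sum]
      _ = ∑ b ∈ range (n + 1), S (b + 1) (E (b + t + 1) (n + t + 1) x) := by
          rw [sum_range_sum_Icc_comm]
          simp only [ih]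
      _ = S (n + 1) x := by
          rw [sum_range_succ, h.E_diag, LinearMap.id_apply, add_eq_right]
          refine sum_eq_zero fun b hb => ?_
          have hbn := mem_range.mp hb
          exact h.S_apply_eq_zero_of_mem_Nc (by omega) (by omega)
            (h.E_apply_mem_Nc (by omega) (by omega) x)

theorem isJordanChain_M (h : IsJordanRecursion L Sb S N Nc R Rc P T E M) {m : ℕ} (hm : 1 ≤ m)
    {b : B} (hb : b ∈ N m) : IsJordanChain L m (fun j => M (m - j) m b) := by
  intro l hl
  obtain ⟨t, rfl⟩ : ∃ t, m = l + t := ⟨m - l, by omega⟩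
  rw [← h.S_apply_eq_zero_of_mem_N (by omega) hl hb, ← h.sum_L_M_apply (by omega : 1 ≤ t)]
  refine sum_congr rfl fun i hi => ?_
  dsimp only
  rw [show l + t - (l - i) = i + t by have := mem_range.mp hi; omega]

theorem Sb_succ_apply_eq_chainDefect (h : IsJordanRecursion L Sb S N Nc R Rc P T E M) {r : ℕ}
    (hr : 1 ≤ r) (x : B) : Sb (r + 1) x = chainDefect L r (fun j => M (r - j) r x) := by
  rw [h.Sb_succ r hr, LinearMap.sum_apply, chainDefect]
  refine sum_congr rfl fun i hi => ?_
  rw [show r - (r - i) = i by have := mem_Icc.mp hi; omega]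
  rfl

theorem S_succ_apply_eq_zero_of_Sb_mem (h : IsJordanRecursion L Sb S N Nc R Rc P T E M) {k : ℕ}
    {x : B} (hx : Sb (k + 1) x ∈ ⨆ j ∈ Icc 1 k, R j) : S (k + 1) x = 0 := by
  rw [h.S_succ_apply, h.sum_P_apply_eq_self le_rfl hx, sub_self]

theorem Sb_succ_apply_mem (h : IsJordanRecursion L Sb S N Nc R Rc P T E M) {k : ℕ} {x : B}
    (hx : x ∈ N k) : Sb (k + 1) x ∈ ⨆ j ∈ Icc 1 (k + 1), R j := by
  have hS := h.S_succ_apply k x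
  rw [eq_sub_iff_add_eq] at hS
  rw [← hS]
  refine add_mem (mem_iSup_Icc_of_mem (by omega) le_rfl (h.S_apply_mem_R hx))
    (sum_mem fun i hi => ?_)
  have hi := mem_Icc.mp hi
  exact mem_iSup_Icc_of_mem hi.1 (by omega) (h.range_P_le i hi.1 (LinearMap.mem_range_self _ _))

theorem Sb_apply_sub_chainDefect_mem (h : IsJordanRecursion L Sb S N Nc R Rc P T E M) {s : ℕ}
    (ih : ∀ d, IsJordanChain L s d → chainDefect L s d ∈ ⨆ j ∈ Icc 1 (s + 1), R j)
    {c : ℕ → B} (hc : IsJordanChain L (s + 1) c) (hc0 : c 0 ∈ N (s + 1)) :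
    Sb (s + 2) (c 0) - chainDefect L (s + 1) c ∈ ⨆ j ∈ Icc 1 (s + 1), R j := by
  set μ : ℕ → B := fun j => M (s + 1 - j) (s + 1) (c 0)
  have hd0 : (μ - c) 0 = 0 := by simp [μ, h.M_diag]
  rw [h.Sb_succ_apply_eq_chainDefect (by omega), ← chainDefect_sub,
    chainDefect_succ_of_apply_zero hd0]
  exact ih _ (((h.isJordanChain_M (by omega) hc0).sub hc).tail hd0)

theorem root_mem_N_one (h : IsJordanRecursion L Sb S N Nc R Rc P T E M) {c : ℕ → B}
    (hc : IsJordanChain L 1 c) : c 0 ∈ N 1 := by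
  rw [h.N_succ, h.N_zero, inf_top_eq, LinearMap.mem_ker, h.S_one]
  simpa using hc 0 le_rfl

theorem root_mem_N_succ (h : IsJordanRecursion L Sb S N Nc R Rc P T E M) {s : ℕ}
    (ih : ∀ d, IsJordanChain L s d → chainDefect L s d ∈ ⨆ j ∈ Icc 1 (s + 1), R j)
    {c : ℕ → B} (hc : IsJordanChain L (s + 2) c) (hc0 : c 0 ∈ N (s + 1)) : c 0 ∈ N (s + 2) := by
  rw [h.N_succ]
  refine ⟨h.S_succ_apply_eq_zero_of_Sb_mem ?_, hc0⟩
  have hdefect : chainDefect L (s + 1) c = -S 1 (c (s + 1)) := by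
    rw [h.S_one, eq_neg_iff_add_eq_zero, add_comm, hc.map_zero_add_chainDefect]
  rw [← sub_add_cancel (Sb (s + 2) (c 0)) (chainDefect L (s + 1) c)]
  refine add_mem (h.Sb_apply_sub_chainDefect_mem ih (hc.mono (by omega)) hc0) ?_
  rw [hdefect]
  exact neg_mem (mem_iSup_Icc_of_mem le_rfl (by omega)
    (h.S_apply_mem_R (h.N_zero ▸ Submodule.mem_top)))

theorem root_mem_N_and_chainDefect_mem (h : IsJordanRecursion L Sb S N Nc R Rc P T E M)
    (r : ℕ) (c : ℕ → B) (hc : IsJordanChain L r c) :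
    c 0 ∈ N r ∧ chainDefect L r c ∈ ⨆ j ∈ Icc 1 (r + 1), R j := by
  induction r using Nat.strong_induction_on generalizing c with
  | _ r ih =>
  rcases r with _ | s
  · exact ⟨h.N_zero ▸ Submodule.mem_top, by simp [chainDefect]⟩
  have ih_defect : ∀ d, IsJordanChain L s d → chainDefect L s d ∈ ⨆ j ∈ Icc 1 (s + 1), R j :=
    fun d hd => (ih s (by omega) d hd).2
  have hroot : c 0 ∈ N (s + 1) := by
    rcases s with _ | s
    · exact h.root_mem_N_one hc
    · exact h.root_mem_N_succ (fun d hd => (ih s (by omega) d hd).2) hc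
        (ih (s + 1) (by omega) c (hc.mono (by omega))).1
  refine ⟨hroot, ?_⟩
  rw [← sub_sub_cancel (Sb (s + 2) (c 0)) (chainDefect L (s + 1) c)]
  refine sub_mem (h.Sb_succ_apply_mem hroot) ?_
  exact iSup_Icc_mono R (by omega) (h.Sb_apply_sub_chainDefect_mem ih_defect hc hroot)

theorem N_le_of_stable (h : IsJordanRecursion L Sb S N Nc R Rc P T E M) {k : ℕ}
    (hstab : ∀ b, jordanRank L b ≤ k ∨ jordanRank L b = ⊤) (m : ℕ) : N (k + 1) ≤ N m := by
  intro b hb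
  have hle : ((k + 1 : ℕ) : ℕ∞) ≤ jordanRank L b := by
    simpa [h.M_diag] using le_jordanRank (by omega) (h.isJordanChain_M (by omega) hb)
  have htop : jordanRank L b = ⊤ := (hstab b).resolve_left fun hk => by
    have := hle.trans hk
    norm_cast at this
    omega
  obtain ⟨c, rfl, hc⟩ := exists_isJordanChain_of_jordanRank_eq_top htop m
  exact (h.root_mem_N_and_chainDefect_mem m c hc).1

theorem sum_S_T_S_apply (h : IsJordanRecursion L Sb S N Nc R Rc P T E M) {n j : ℕ}
    (hjn : j + 1 ≤ n) (i : ℕ) {x : B} (hx : x ∈ Nc (j + 1)) :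
    ∑ j' ∈ Icc 1 n, S (i + j') (T j' (S (j + 1) x)) = S (i + (j + 1)) x := by
  rw [sum_eq_single_of_mem (j + 1) (mem_Icc.mpr ⟨by omega, hjn⟩), h.T_S _ (by omega) x hx]
  intro j' hj' hne
  rw [h.T_apply_eq_zero_of_mem_R (mem_Icc.mp hj').1 (by omega) hne
    (h.S_apply_mem_R (h.Nc_le_N j hx)), map_zero]

theorem apply_S_apply_of_mem_Nc (h : IsJordanRecursion L Sb S N Nc R Rc P T E M) {k : ℕ}
    {ψ : ℕ → B' →ₗ[𝕂] B'} (hψ0 : ψ 0 = LinearMap.id)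
    (hψ : ∀ i, 1 ≤ i → ψ i = ∑ j ∈ Icc 1 (k + 1), (S (i + j)).comp (T j))
    {j l : ℕ} (hjk : j ≤ k) (hjl : j ≤ l) {x : B} (hx : x ∈ Nc (j + 1)) :
    ψ (l - j) (S (j + 1) x) = S (l + 1) x := by
  rcases hjl.eq_or_lt with rfl | hjl
  · simp [hψ0]
  · rw [hψ (l - j) (by omega), LinearMap.sum_apply]
    simpa [show l - j + (j + 1) = l + 1 by omega] using
      h.sum_S_T_S_apply (by omega) (l - j) hx

end IsJordanRecursion

end

theorem stmt_10_general
    {𝕂 : Type*} [RCLike 𝕂]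
    {B B' : Type*} [AddCommGroup B] [Module 𝕂 B]
    [AddCommGroup B'] [Module 𝕂 B']
    (L : ℕ → B →ₗ[𝕂] B')
    (Sb S : ℕ → B →ₗ[𝕂] B')
    (N Nc : ℕ → Submodule 𝕂 B)
    (R Rc : ℕ → Submodule 𝕂 B')
    (P : ℕ → B' →ₗ[𝕂] B')
    (T : ℕ → B' →ₗ[𝕂] B)
    (E M : ℕ → ℕ → B →ₗ[𝕂] B)
    (hN0 : N 0 = ⊤)
    (hSb1 : Sb 1 = L 0)
    (hSbrec : ∀ k, 1 ≤ k → Sb (k + 1) = ∑ i ∈ Finset.Icc 1 k, (L i).comp (M i k))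
    (hSdef : ∀ k, S (k + 1) = Sb (k + 1) - ∑ i ∈ Finset.Icc 1 k, (P i).comp (Sb (k + 1)))
    (hNdef : ∀ k, N (k + 1) = LinearMap.ker (S (k + 1)) ⊓ N k)
    (hRdef : ∀ k, R (k + 1) = Submodule.map (S (k + 1)) (N k))
    (hNcompl : ∀ k, Disjoint (Nc (k + 1)) (N (k + 1)) ∧ Nc (k + 1) ⊔ N (k + 1) = N k)
    (hRcompl : ∀ k, Disjoint (R (k + 1)) (Rc (k + 1)) ∧ R (k + 1) ⊔ Rc (k + 1) = Rc k)
    (hPrange : ∀ i, 1 ≤ i → LinearMap.range (P i) ≤ R i)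
    (hPid : ∀ i, 1 ≤ i → ∀ y ∈ R i, P i y = y)
    (hPzeroRc : ∀ i, 1 ≤ i → ∀ y ∈ Rc i, P i y = 0)
    (hPzeroR : ∀ i j, 1 ≤ j → j < i → ∀ y ∈ R j, P i y = 0)
    (hTrange : ∀ i, 1 ≤ i → ∀ y, T i y ∈ Nc i)
    (hTS : ∀ i, 1 ≤ i → ∀ x ∈ Nc i, T i (S i x) = x)
    (hST : ∀ i, 1 ≤ i → ∀ y, S i (T i y) = P i y)
    (hEdiag : ∀ k, E (k + 1) (k + 1) = LinearMap.id)
    (hErec : ∀ k i, 1 ≤ i → i ≤ k →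
      E i (k + 1) = -((T i).comp (∑ v ∈ Finset.Icc (i + 1) (k + 1), (Sb v).comp (E v (k + 1)))))
    (hM11 : M 1 1 = LinearMap.id)
    (hM1 : ∀ k, 1 ≤ k → M 1 (k + 1) = E 1 (k + 1))
    (hMrec : ∀ k a, 2 ≤ a → a ≤ k + 1 →
      M a (k + 1) = ∑ b ∈ Finset.Icc (a - 1) k, (M (a - 1) b).comp (E (b + 1) (k + 1)))
    (rank : B → ℕ∞)
    (hrank : ∀ b0 : B, rank b0 = sSup {x : ℕ∞ | ∃ m : ℕ, 1 ≤ m ∧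
      (∃ b : ℕ → B, b 0 = b0 ∧
        ∀ l, l + 1 ≤ m → ∑ i ∈ Finset.range (l + 1), L i (b (l - i)) = 0) ∧ x = (m : ℕ∞)})
    (k : ℕ)
    (hstab : (∀ b0 : B, rank b0 ≤ (k : ℕ∞) ∨ rank b0 = ⊤) ∧ ∃ b0 : B, rank b0 = (k : ℕ∞))
    (ψ : ℕ → B' →ₗ[𝕂] B')
    (hψ0 : ψ 0 = LinearMap.id)
    (hψ : ∀ i, 1 ≤ i → ψ i = ∑ j ∈ Finset.Icc 1 (k + 1), (S (i + j)).comp (T j))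
    (Pn : ℕ → B →ₗ[𝕂] B)
    (hPnrange : ∀ i, 1 ≤ i → i ≤ k + 1 → LinearMap.range (Pn i) ≤ Nc i)
    (hPnsum : ∀ x : B, x - ∑ i ∈ Finset.Icc 1 (k + 1), Pn i x ∈ N (k + 1))
    :
    ∀ l : ℕ, S (l + 1) = ∑ j ∈ Finset.range (min (l + 1) (k + 1)),
      (ψ (l - j)).comp ((S (j + 1)).comp (Pn (j + 1))) := by
  have h : IsJordanRecursion L Sb S N Nc R Rc P T E M :=
    ⟨hN0, hSb1, hSbrec, hSdef, hNdef, hRdef, hNcompl, fun k => (hRcompl k).2, hPrange, hPid,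
      hPzeroRc, hPzeroR, hTrange, hTS, hST, hEdiag, hErec, hM11, hM1, hMrec⟩
  obtain rfl : rank = jordanRank L := funext hrank
  have hPn_mem : ∀ j ≤ k, ∀ x, Pn (j + 1) x ∈ Nc (j + 1) := fun j hj x =>
    hPnrange (j + 1) (by omega) (by omega) (LinearMap.mem_range_self _ x)
  intro l
  ext x
  calc S (l + 1) x = S (l + 1) (∑ i ∈ Icc 1 (k + 1), Pn i x) := by
        rw [← sub_eq_zero, ← map_sub]
        exact h.S_apply_eq_zero_of_mem_N (by omega) le_rfl (h.N_le_of_stable hstab.1 _ (hPnsum x))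
    _ = ∑ j ∈ range (k + 1), S (l + 1) (Pn (j + 1) x) := by
        rw [map_sum, sum_Icc_one_eq_sum_range]
    _ = ∑ j ∈ range (min (l + 1) (k + 1)), S (l + 1) (Pn (j + 1) x) := by
        refine (sum_subset (range_subset_range.mpr (min_le_right _ _)) fun j hj hj' => ?_).symm
        have := mem_range.mp hj
        exact h.S_apply_eq_zero_of_mem_Nc (by omega) (by rw [mem_range] at hj'; omega)
          (hPn_mem j (by omega) x)
    _ = _ := by
        rw [LinearMap.sum_apply]
        refine sum_congr rfl fun j hj => ?_
        have hj := mem_range.mp hj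
        exact (h.apply_S_apply_of_mem_Nc hψ0 hψ (by omega) (by omega)
          (hPn_mem j (by omega) x)).symm

theorem stmt_10
    {𝕂 : Type*} [RCLike 𝕂]
    {B B' : Type*} [AddCommGroup B] [Module 𝕂 B]
    [AddCommGroup B'] [Module 𝕂 B']
    (L : ℕ → B →ₗ[𝕂] B')
    (Sb S : ℕ → B →ₗ[𝕂] B')
    (N Nc : ℕ → Submodule 𝕂 B)
    (R Rc : ℕ → Submodule 𝕂 B')
    (P : ℕ → B' →ₗ[𝕂] B')
    (T : ℕ → B' →ₗ[𝕂] B)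
    (E M : ℕ → ℕ → B →ₗ[𝕂] B)
    (hL : ∃ i, L i ≠ 0)
    (hN0 : N 0 = ⊤) (hRc0 : Rc 0 = ⊤)
    (hSb1 : Sb 1 = L 0)
    (hSbrec : ∀ k, 1 ≤ k → Sb (k + 1) = ∑ i ∈ Finset.Icc 1 k, (L i).comp (M i k))
    (hSdef : ∀ k, S (k + 1) = Sb (k + 1) - ∑ i ∈ Finset.Icc 1 k, (P i).comp (Sb (k + 1)))
    (hNdef : ∀ k, N (k + 1) = LinearMap.ker (S (k + 1)) ⊓ N k)
    (hRdef : ∀ k, R (k + 1) = Submodule.map (S (k + 1)) (N k))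
    (hNcompl : ∀ k, Disjoint (Nc (k + 1)) (N (k + 1)) ∧ Nc (k + 1) ⊔ N (k + 1) = N k)
    (hRcompl : ∀ k, Disjoint (R (k + 1)) (Rc (k + 1)) ∧ R (k + 1) ⊔ Rc (k + 1) = Rc k)
    (hPrange : ∀ i, 1 ≤ i → LinearMap.range (P i) ≤ R i)
    (hPid : ∀ i, 1 ≤ i → ∀ y ∈ R i, P i y = y)
    (hPzeroRc : ∀ i, 1 ≤ i → ∀ y ∈ Rc i, P i y = 0)
    (hPzeroR : ∀ i j, 1 ≤ j → j < i → ∀ y ∈ R j, P i y = 0)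
    (hTrange : ∀ i, 1 ≤ i → ∀ y, T i y ∈ Nc i)
    (hTS : ∀ i, 1 ≤ i → ∀ x ∈ Nc i, T i (S i x) = x)
    (hST : ∀ i, 1 ≤ i → ∀ y, S i (T i y) = P i y)
    (hE11 : E 1 1 = LinearMap.id)
    (hEdiag : ∀ k, E (k + 1) (k + 1) = LinearMap.id)
    (hErec : ∀ k i, 1 ≤ i → i ≤ k →
      E i (k + 1) = -((T i).comp (∑ v ∈ Finset.Icc (i + 1) (k + 1), (Sb v).comp (E v (k + 1)))))
    (hM11 : M 1 1 = LinearMap.id)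
    (hM1 : ∀ k, 1 ≤ k → M 1 (k + 1) = E 1 (k + 1))
    (hMrec : ∀ k a, 2 ≤ a → a ≤ k + 1 →
      M a (k + 1) = ∑ b ∈ Finset.Icc (a - 1) k, (M (a - 1) b).comp (E (b + 1) (k + 1)))
    (rank : B → ℕ∞)
    (hrank : ∀ b0 : B, rank b0 = sSup {x : ℕ∞ | ∃ m : ℕ, 1 ≤ m ∧
      (∃ b : ℕ → B, b 0 = b0 ∧
        ∀ l, l + 1 ≤ m → ∑ i ∈ Finset.range (l + 1), L i (b (l - i)) = 0) ∧ x = (m : ℕ∞)})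
    (k : ℕ)
    (hstab : (∀ b0 : B, rank b0 ≤ (k : ℕ∞) ∨ rank b0 = ⊤) ∧ ∃ b0 : B, rank b0 = (k : ℕ∞))
    (ψ : ℕ → B' →ₗ[𝕂] B')
    (hψ0 : ψ 0 = LinearMap.id)
    (hψ : ∀ i, 1 ≤ i → ψ i = ∑ j ∈ Finset.Icc 1 (k + 1), (S (i + j)).comp (T j))
    (Pn : ℕ → B →ₗ[𝕂] B)
    (hPnrange : ∀ i, 1 ≤ i → i ≤ k + 1 → LinearMap.range (Pn i) ≤ Nc i)
    (hPnid : ∀ i, 1 ≤ i → i ≤ k + 1 → ∀ x ∈ Nc i, Pn i x = x)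
    (hPnzero : ∀ i j, 1 ≤ i → i ≤ k + 1 → 1 ≤ j → j ≤ k + 1 → j ≠ i → ∀ x ∈ Nc j, Pn i x = 0)
    (hPnN : ∀ i, 1 ≤ i → i ≤ k + 1 → ∀ x ∈ N (k + 1), Pn i x = 0)
    (hPnsum : ∀ x : B, x - ∑ i ∈ Finset.Icc 1 (k + 1), Pn i x ∈ N (k + 1))
    :
    ∀ l : ℕ, S (l + 1) = ∑ j ∈ Finset.range (min (l + 1) (k + 1)),
      (ψ (l - j)).comp ((S (j + 1)).comp (Pn (j + 1))) :=
  stmt_10_general L Sb S N Nc R Rc P T E M hN0 hSb1 hSbrec hSdef hNdef hRdef hNcompl hRcompl hPrange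
    hPid hPzeroRc hPzeroR hTrange hTS hST hEdiag hErec hM11 hM1 hMrec rank hrank k hstab ψ hψ0 hψ Pn
    hPnrange hPnsum
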